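/- Let λ ∈ SC^(m) with main diagonal hook lengths δ_1 > δ_2 > ... > δ_d, and let λ̄ be the self-conjugate partition with main diagonal hook lengths {δ_2, ..., δ_d}. Let μ and μ̄ be the corresponding partitions of λ and λ̄ under the bijection. If δ_1 ≡ 1 mod 4, then μ̄ = (μ_2, μ_3, ..., μ_ℓ); if δ_1 ≡ 3 mod 4, then μ̄ = (μ_1 − 1, μ_2 − 1, ..., μ_ℓ − 1). -/

import Mathlib

/-- A partition, encoded as an antitone, eventually-zero function (0-indexed parts). -/
def IsPartition (l : ℕ → ℕ) : Prop := Antitone l ∧ ∃ N, l N = 0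

/-- The conjugate partition: `conj l j` is the number of rows whose length exceeds `j`. -/
noncomputable def conj (l : ℕ → ℕ) (j : ℕ) : ℕ := Set.ncard {i | j < l i}

/-- Hook length of the box in row `i`, column `j` (0-indexed): arm + leg + 1. -/
noncomputable def hookLen (l : ℕ → ℕ) (i j : ℕ) : ℕ :=
  (l i - (j + 1)) + (conj l j - (i + 1)) + 1

/-- A self-conjugate partition equals its conjugate. -/
def SelfConj (l : ℕ → ℕ) : Prop := conj l = l

/-- Side length of the Durfee square: the number of boxes on the main diagonal. -/
noncomputable def durfee (l : ℕ → ℕ) : ℕ := Set.ncard {i | i < l i}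

/-- The number of boxes of the Young diagram. -/
noncomputable def psize (l : ℕ → ℕ) : ℕ := Set.ncard {p : ℕ × ℕ | p.2 < l p.1}

/-- The disparity: (#boxes with odd hook length) - (#boxes with even hook length). -/
noncomputable def dp (l : ℕ → ℕ) : ℤ :=
  (Set.ncard {p : ℕ × ℕ | p.2 < l p.1 ∧ Odd (hookLen l p.1 p.2)} : ℤ) -
  (Set.ncard {p : ℕ × ℕ | p.2 < l p.1 ∧ Even (hookLen l p.1 p.2)} : ℤ)

/-- The set of main diagonal hook lengths. -/
def Dset (l : ℕ → ℕ) : Set ℕ := {x | ∃ i, i < l i ∧ x = hookLen l i i}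

/-- Main diagonal hook lengths congruent to 1 mod 4. -/
def D1 (l : ℕ → ℕ) : Set ℕ := {x ∈ Dset l | x % 4 = 1}

/-- Main diagonal hook lengths congruent to 3 mod 4. -/
def D3 (l : ℕ → ℕ) : Set ℕ := {x ∈ Dset l | x % 4 = 3}

/-- A `t`-core partition: no hook length is divisible by `t`. -/
def IsCore (l : ℕ → ℕ) (t : ℕ) : Prop := ∀ i j, j < l i → ¬ (t ∣ hookLen l i j)

/-- `(a,b)` (restricted to indices `< r`, `< s`) is the diagonal sequence pair of the
self-conjugate partition `l`: `D1 l = {4 a i + 1}` with `a` strictly decreasing, and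
`D3 l = {4 b j - 1}` with `b` strictly decreasing and positive. -/
def DiagPair (l : ℕ → ℕ) (r s : ℕ) (a b : ℕ → ℕ) : Prop :=
  StrictAntiOn a (Set.Iio r) ∧ StrictAntiOn b (Set.Iio s) ∧
  (∀ j, j < s → 1 ≤ b j) ∧
  D1 l = {x | ∃ i, i < r ∧ x = 4 * a i + 1} ∧
  D3 l = {x | ∃ j, j < s ∧ x = 4 * b j - 1}

/-- `μ` is the image of the diagonal sequence pair `((a),(b))` under the map `φ`:
the first `r` parts are `a i + (i+1) + s - r` (1-indexed `a_i + i + s - r`), and the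
remaining parts form the conjugate of `γ = (b 0 - s, b 1 - s + 1, …, b (s-1) - 1)`. -/
def PhiImage (r s : ℕ) (a b : ℕ → ℕ) (μ : ℕ → ℕ) : Prop :=
  (∀ i, i < r → (μ i : ℤ) = (a i : ℤ) + (i + 1) + s - r) ∧
  (∀ i, r ≤ i → μ i = Set.ncard {j | j < s ∧ i - r < b j + j - s})

/-- `μ` is the corresponding partition of the self-conjugate partition `l`
under the bijection `φ` of Cho–Huh–Sohn. -/
def Corresponds (l μ : ℕ → ℕ) : Prop :=
  ∃ r s a b, DiagPair l r s a b ∧ PhiImage r s a b μ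

/-!
The correspondence is well defined: a strictly decreasing enumeration is determined by its
range, so the diagonal sequence pair of `λ`, and with it `μ`, is unique. Since `λ` is
self-conjugate, `δ₁` is the largest of all diagonal hooks, hence `δ₁ = 4 a₀ + 1` or
`δ₁ = 4 b₀ - 1`, and deleting it deletes `a₀` or `b₀` from the diagonal sequence pair.
Reading off `φ`: dropping `a₀` drops the first part of `μ`; dropping `b₀` lowers `s` by one,
which lowers the first `r` parts by one, and deletes the first part of `γ`, which lowers every
part of its conjugate by one.
-/

open Set

namespace StrictAntiOn

variable {f g : ℕ → ℕ} {r r' : ℕ}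

lemma ncard_image_Iio (hf : StrictAntiOn f (Iio r)) {k : ℕ} (hk : k ≤ r) :
    (f '' Iio k).ncard = k := by
  rw [(hf.injOn.mono (Iio_subset_Iio hk)).ncard_image, ncard_Iio_nat]

lemma ncard_setOf_mem_image_Iio_lt (hf : StrictAntiOn f (Iio r)) {i : ℕ} (hi : i < r) :
    {x ∈ f '' Iio r | f i < x}.ncard = i := by
  have h : {x ∈ f '' Iio r | f i < x} = f '' Iio i := by
    ext x
    constructor
    · rintro ⟨⟨j, hj, rfl⟩, hlt⟩
      exact ⟨j, (hf.lt_iff_gt hi hj).1 hlt, rfl⟩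
    · rintro ⟨j, hj, rfl⟩
      exact ⟨⟨j, lt_trans hj hi, rfl⟩, hf (lt_trans hj hi) hi hj⟩
  rw [h, hf.ncard_image_Iio hi.le]

/-- The `i`-th term of a strictly decreasing enumeration is the element of its range
exceeded by exactly `i` others, so the enumeration is determined by its range. -/
lemma eqOn_of_image_Iio_eq (hf : StrictAntiOn f (Iio r)) (hg : StrictAntiOn g (Iio r'))
    (h : f '' Iio r = g '' Iio r') : r = r' ∧ EqOn f g (Iio r) := by
  obtain rfl : r = r' := by
    rw [← hf.ncard_image_Iio le_rfl, h, hg.ncard_image_Iio le_rfl]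
  refine ⟨rfl, fun i hi => ?_⟩
  obtain ⟨j, hj, hji⟩ : f i ∈ g '' Iio r := h ▸ mem_image_of_mem f hi
  obtain rfl : i = j := by
    rw [← hf.ncard_setOf_mem_image_Iio_lt hi, h, ← hji, hg.ncard_setOf_mem_image_Iio_lt hj]
  exact hji.symm

lemma eq_apply_zero_of_mem_image_Iio (hf : StrictAntiOn f (Iio r)) {x : ℕ}
    (hx : x ∈ f '' Iio r) (h : f 0 ≤ x) : x = f 0 := by
  obtain ⟨i, hi, rfl⟩ := hx
  exact le_antisymm (hf.antitoneOn ((Nat.zero_le i).trans_lt hi) hi (Nat.zero_le i)) h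

lemma comp_add_one (hf : StrictAntiOn f (Iio r)) :
    StrictAntiOn (fun i => f (i + 1)) (Iio (r - 1)) := fun i hi j hj hij =>
  hf (show i + 1 < r by simp only [mem_Iio] at hi; omega)
    (show j + 1 < r by simp only [mem_Iio] at hj; omega) (Nat.succ_lt_succ hij)

lemma image_Iio_diff_apply_zero (hf : StrictAntiOn f (Iio r)) :
    f '' Iio r \ {f 0} = (fun i => f (i + 1)) '' Iio (r - 1) := by
  ext x
  constructor
  · rintro ⟨⟨i, hi, rfl⟩, hne⟩
    obtain ⟨j, rfl⟩ := Nat.exists_eq_succ_of_ne_zero (show i ≠ 0 by rintro rfl; exact hne rfl)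
    exact ⟨j, show j < r - 1 by simp only [mem_Iio] at hi; omega, rfl⟩
  · rintro ⟨i, hi, rfl⟩
    have hi' : i + 1 < r := by simp only [mem_Iio] at hi; omega
    exact ⟨⟨i + 1, hi', rfl⟩, (hf (hi'.trans' i.succ_pos) hi' i.succ_pos).ne⟩

lemma antitoneOn_add_id (hf : StrictAntiOn f (Iio r)) :
    AntitoneOn (fun i => f i + i) (Iio r) :=
  antitoneOn_of_succ_le ordConnected_Iio fun i _ hi hi1 => by
    have := hf hi hi1 (Order.lt_succ i)
    simp only [Order.succ_eq_add_one] at this ⊢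
    omega

end StrictAntiOn

lemma ncard_setOf_add_one_mem {S : Set ℕ}
    (hdown : ∀ i j, i ≤ j → j ∈ S → i ∈ S) :
    {i | i + 1 ∈ S}.ncard = S.ncard - 1 := by
  have hpre : {i | i + 1 ∈ S} = (· + 1) ⁻¹' (S \ {0}) := by
    ext i; simp
  rw [hpre, ncard_preimage_of_injective_subset_range (add_left_injective 1)]
  · rcases S.eq_empty_or_nonempty with rfl | ⟨x, hx⟩
    · simp
    · exact ncard_sdiff_singleton_of_mem (hdown 0 x x.zero_le hx)
  · rintro x ⟨-, hx⟩
    exact ⟨x - 1, Nat.sub_add_cancel (Nat.one_le_iff_ne_zero.2 hx)⟩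

lemma strictMono_four_mul_add_one : StrictMono fun x : ℕ => 4 * x + 1 :=
  fun x y h => show 4 * x + 1 < 4 * y + 1 by omega

lemma strictMono_four_mul_sub_one : StrictMono fun x : ℕ => 4 * x - 1 :=
  fun x y h => show 4 * x - 1 < 4 * y - 1 by omega

section Partition

variable {l l' μ μ' : ℕ → ℕ} {r r' s s' : ℕ} {a a' b b' : ℕ → ℕ}

/-- On a self-conjugate diagram the `i`-th diagonal hook has length `2 (l i - i) - 1`. -/
lemma le_hookLen_zero_of_mem_Dset (hl : Antitone l) (hsc : SelfConj l) {x : ℕ}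
    (hx : x ∈ Dset l) : x ≤ hookLen l 0 0 := by
  obtain ⟨i, -, rfl⟩ := hx
  have := hl (Nat.zero_le i)
  simp only [hookLen, show conj l = l from hsc]
  omega

lemma hookLen_zero_eq_apply_zero (hl : Antitone l) (hsc : SelfConj l) {f : ℕ → ℕ} {n : ℕ}
    (hf : StrictAntiOn f (Iio n)) (hsub : f '' Iio n ⊆ Dset l)
    (hmem : hookLen l 0 0 ∈ f '' Iio n) : 0 < n ∧ hookLen l 0 0 = f 0 := by
  obtain ⟨i, hi, -⟩ := id hmem
  have hn : 0 < n := (Nat.zero_le i).trans_lt hi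
  exact ⟨hn, hf.eq_apply_zero_of_mem_image_Iio hmem
    (le_hookLen_zero_of_mem_Dset hl hsc (hsub (mem_image_of_mem f hn)))⟩

lemma D1_eq_diff_of_Dset_eq_diff {x : ℕ} (h : Dset l' = Dset l \ {x}) :
    D1 l' = D1 l \ {x} := by
  rw [D1, D1, h]
  exact ext fun _ => and_right_comm

lemma D3_eq_diff_of_Dset_eq_diff {x : ℕ} (h : Dset l' = Dset l \ {x}) :
    D3 l' = D3 l \ {x} := by
  rw [D3, D3, h]
  exact ext fun _ => and_right_comm

lemma setOf_exists_lt_eq_image_Iio (f : ℕ → ℕ) (n : ℕ) :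
    {x | ∃ i, i < n ∧ x = f i} = f '' Iio n := by
  ext
  simp [eq_comm]

lemma diagPair_iff : DiagPair l r s a b ↔
    StrictAntiOn a (Iio r) ∧ StrictAntiOn b (Iio s) ∧ (∀ j, j < s → 1 ≤ b j) ∧
    D1 l = (fun i => 4 * a i + 1) '' Iio r ∧ D3 l = (fun j => 4 * b j - 1) '' Iio s := by
  simp only [DiagPair, setOf_exists_lt_eq_image_Iio]

lemma DiagPair.unique (h : DiagPair l r s a b) (h' : DiagPair l r' s' a' b') :
    r = r' ∧ s = s' ∧ EqOn a a' (Iio r) ∧ EqOn b b' (Iio s) := by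
  obtain ⟨ha, hb, -, hD1, hD3⟩ := diagPair_iff.1 h
  obtain ⟨ha', hb', -, hD1', hD3'⟩ := diagPair_iff.1 h'
  obtain ⟨rfl, hfa⟩ := (strictMono_four_mul_add_one.comp_strictAntiOn ha).eqOn_of_image_Iio_eq
    (strictMono_four_mul_add_one.comp_strictAntiOn ha') (hD1.symm.trans hD1')
  obtain ⟨rfl, hfb⟩ := (strictMono_four_mul_sub_one.comp_strictAntiOn hb).eqOn_of_image_Iio_eq
    (strictMono_four_mul_sub_one.comp_strictAntiOn hb') (hD3.symm.trans hD3')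
  exact ⟨rfl, rfl, fun i hi => strictMono_four_mul_add_one.injective (hfa hi),
    fun j hj => strictMono_four_mul_sub_one.injective (hfb hj)⟩

lemma DiagPair.tail_fst (h : DiagPair l r s a b) (hD1 : D1 l' = D1 l \ {4 * a 0 + 1})
    (hD3 : D3 l' = D3 l) : DiagPair l' (r - 1) s (fun i => a (i + 1)) b := by
  obtain ⟨ha, hb, hb1, hD1l, hD3l⟩ := diagPair_iff.1 h
  refine diagPair_iff.2 ⟨ha.comp_add_one, hb, hb1, ?_, hD3.trans hD3l⟩
  rw [hD1, hD1l]
  exact (strictMono_four_mul_add_one.comp_strictAntiOn ha).image_Iio_diff_apply_zero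

lemma DiagPair.tail_snd (h : DiagPair l r s a b) (hD1 : D1 l' = D1 l)
    (hD3 : D3 l' = D3 l \ {4 * b 0 - 1}) : DiagPair l' r (s - 1) a (fun j => b (j + 1)) := by
  obtain ⟨ha, hb, hb1, hD1l, hD3l⟩ := diagPair_iff.1 h
  refine diagPair_iff.2 ⟨ha, hb.comp_add_one, fun j hj => hb1 (j + 1) (by omega),
    hD1.trans hD1l, ?_⟩
  rw [hD3, hD3l]
  exact (strictMono_four_mul_sub_one.comp_strictAntiOn hb).image_Iio_diff_apply_zero

lemma PhiImage.congr (h : PhiImage r s a b μ) (h' : PhiImage r s a' b' μ')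
    (ha : EqOn a a' (Iio r)) (hb : EqOn b b' (Iio s)) : μ = μ' := by
  funext i
  rcases lt_or_ge i r with hi | hi
  · have e := h.1 i hi
    have e' := h'.1 i hi
    rw [ha hi] at e
    omega
  · rw [h.2 i hi, h'.2 i hi]
    exact congrArg ncard (ext fun j => and_congr_right fun hj => by rw [hb hj])

lemma Corresponds.unique (h : Corresponds l μ) (h' : Corresponds l μ') : μ = μ' := by
  obtain ⟨r, s, a, b, hab, hφ⟩ := h
  obtain ⟨r', s', a', b', hab', hφ'⟩ := h'
  obtain ⟨rfl, rfl, ha, hb⟩ := hab.unique hab'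
  exact hφ.congr hφ' ha hb

lemma PhiImage.tail_fst (h : PhiImage r s a b μ) (hr : 0 < r) :
    PhiImage (r - 1) s (fun i => a (i + 1)) b (fun i => μ (i + 1)) := by
  refine ⟨fun i hi => ?_, fun i hi => ?_⟩ <;> dsimp only
  · have := h.1 (i + 1) (by omega)
    omega
  · rw [h.2 (i + 1) (by omega), show i + 1 - r = i - (r - 1) by omega]

lemma PhiImage.tail_snd (h : PhiImage r s a b μ) (ha : StrictAntiOn a (Iio r))
    (hb : StrictAntiOn b (Iio s)) (hs : 0 < s) :
    PhiImage r (s - 1) a (fun j => b (j + 1)) (fun i => μ i - 1) := by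
  refine ⟨fun i hi => ?_, fun i hi => ?_⟩ <;> dsimp only
  · have hμ := h.1 i hi
    have ha_last := ha.antitoneOn_add_id hi (show r - 1 < r by omega) (show i ≤ r - 1 by omega)
    simp only at ha_last
    omega
  · set T : Set ℕ := {j | j < s ∧ i - r < b j + j - s}
    have hT : {j | j < s - 1 ∧ i - r < b (j + 1) + j - (s - 1)} = {j | j + 1 ∈ T} := by
      ext j
      simp only [T, mem_ofPred_eq]
      constructor <;> rintro ⟨hj, hlt⟩ <;> exact ⟨by omega, by omega⟩
    have hdown : ∀ j j', j ≤ j' → j' ∈ T → j ∈ T := fun j j' hle ⟨hj', hlt⟩ => by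
      have hmono := hb.antitoneOn_add_id (show j < s by omega) hj' hle
      exact ⟨by omega, by simp only at hmono; omega⟩
    rw [h.2 i hi, hT, ncard_setOf_add_one_mem hdown]

lemma Corresponds.shift_of_hookLen_mod_four_eq_one (h : Corresponds l μ) (hl : Antitone l)
    (hsc : SelfConj l) (h0 : 0 < l 0) (h1 : hookLen l 0 0 % 4 = 1)
    (hD : Dset l' = Dset l \ {hookLen l 0 0}) : Corresponds l' (fun i => μ (i + 1)) := by
  obtain ⟨r, s, a, b, hab, hφ⟩ := h
  obtain ⟨ha, -, -, hD1, -⟩ := diagPair_iff.1 hab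
  have hδ : hookLen l 0 0 ∈ D1 l := ⟨⟨0, h0, rfl⟩, h1⟩
  rw [hD1] at hδ
  obtain ⟨hr, hδa⟩ := hookLen_zero_eq_apply_zero hl hsc
    (strictMono_four_mul_add_one.comp_strictAntiOn ha) (hD1 ▸ sep_subset _ _) hδ
  refine ⟨r - 1, s, fun i => a (i + 1), b, hab.tail_fst ?_ ?_, hφ.tail_fst hr⟩
  · rw [D1_eq_diff_of_Dset_eq_diff hD, hδa]
    rfl
  · rw [D3_eq_diff_of_Dset_eq_diff hD, sdiff_singleton_eq_self]
    exact fun hδ3 => by have := hδ3.2; omega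

lemma Corresponds.pred_of_hookLen_mod_four_eq_three (h : Corresponds l μ) (hl : Antitone l)
    (hsc : SelfConj l) (h0 : 0 < l 0) (h3 : hookLen l 0 0 % 4 = 3)
    (hD : Dset l' = Dset l \ {hookLen l 0 0}) : Corresponds l' (fun i => μ i - 1) := by
  obtain ⟨r, s, a, b, hab, hφ⟩ := h
  obtain ⟨ha, hb, -, -, hD3⟩ := diagPair_iff.1 hab
  have hδ : hookLen l 0 0 ∈ D3 l := ⟨⟨0, h0, rfl⟩, h3⟩
  rw [hD3] at hδ
  obtain ⟨hs, hδb⟩ := hookLen_zero_eq_apply_zero hl hsc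
    (strictMono_four_mul_sub_one.comp_strictAntiOn hb) (hD3 ▸ sep_subset _ _) hδ
  refine ⟨r, s - 1, a, fun j => b (j + 1), hab.tail_snd ?_ ?_, hφ.tail_snd ha hb hs⟩
  · rw [D1_eq_diff_of_Dset_eq_diff hD, sdiff_singleton_eq_self]
    exact fun hδ1 => by have := hδ1.2; omega
  · rw [D3_eq_diff_of_Dset_eq_diff hD, hδb]
    rfl

end Partition

theorem delete_largest_diagonal_hook_general (l lb μ μb : ℕ → ℕ)
    (hl : IsPartition l) (hsc : SelfConj l) (h0 : 0 < l 0)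
    (hD : Dset lb = Dset l \ {hookLen l 0 0})
    (hcorr : Corresponds l μ) (hcorrb : Corresponds lb μb) :
    (hookLen l 0 0 % 4 = 1 → ∀ i, μb i = μ (i + 1)) ∧
    (hookLen l 0 0 % 4 = 3 → ∀ i, μb i = μ i - 1) :=
  ⟨fun h1 => congrFun (hcorrb.unique (hcorr.shift_of_hookLen_mod_four_eq_one hl.1 hsc h0 h1 hD)),
    fun h3 => congrFun (hcorrb.unique (hcorr.pred_of_hookLen_mod_four_eq_three hl.1 hsc h0 h3 hD))⟩

theorem delete_largest_diagonal_hook (l lb μ μb : ℕ → ℕ)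
    (hl : IsPartition l) (hsc : SelfConj l) (h0 : 0 < l 0)
    (hlb : IsPartition lb) (hscb : SelfConj lb)
    (hD : Dset lb = Dset l \ {hookLen l 0 0})
    (hμ : IsPartition μ) (hμb : IsPartition μb)
    (hcorr : Corresponds l μ) (hcorrb : Corresponds lb μb) :
    (hookLen l 0 0 % 4 = 1 → ∀ i, μb i = μ (i + 1)) ∧
    (hookLen l 0 0 % 4 = 3 → ∀ i, μb i = μ i - 1) :=
  delete_largest_diagonal_hook_general l lb μ μb hl hsc h0 hD hcorr hcorrb
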